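/- For all reals p, q, λ ∈ [0,1] and every positive integer h, the inequality g(h, λp + (1-λ)q) ≥ (1-λ)·[λ·g(h-1, p) + (1-λ)·g(h, q)] holds, where g(h,p) = p·exp(-0.1·h·p^(1/h)) for h ≥ 1 and g(0,p) = p. -/

import Mathlib

noncomputable def g (h : ℕ) (p : ℝ) : ℝ :=
  if h = 0 then p else p * Real.exp (-0.1 * h * p ^ ((1 : ℝ) / h))

/-!
Write `h = m + 1`, `b = 1 - lam`, `x = lam * p + b * q` and `G = g (m + 1)`. On `[0, 1]`, `G` is
increasing and concave, with derivative
`G' t = (1 - t^(1/(m+1)) / 10) * exp (-(m+1) * t^(1/(m+1)) / 10)`.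
The exponents of `g m` and `g (m + 1)` are compared by AM-GM in the form
`(m + 1) * V ≤ a + m * p^(1/m)` whenever `V^(m+1) ≤ a * p`.

If `q ≥ p / 9`, concavity gives `G x ≥ lam * G p + b * G q`, and the claim follows from
`G p ≥ exp (-1/10) * g m p ≥ 9/10 * g m p` and `G q ≥ G p / 9`.

If `q < p / 9`, the tangent line of `G` at `x` gives `G x ≥ G q + lam * (p - q) * G' x`; as
`q * G' x ≤ G q`, the claim reduces to `b * g m p ≤ (p + b * q) * G' x`. With
`T = b * q / p ≤ 1/9` and `U = x^(1/(m+1))`, taking logarithms this follows from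
`b ≤ exp (-lam)`, `exp (9/10 * T) ≤ 1 + T`, `exp (-U/5) ≤ 1 - U/10` and
`(m + 3) * U ≤ 9 * (lam + T) + m * p^(1/m)`. The last one is AM-GM for
`V = (1 + 2/(m+1)) * U`, since `(1 + 2/(m+1))^(m+1) ≤ exp 2 < 9`.
-/

open Real Set

lemma succ_mul_le_add_mul_of_pow_succ_le (m : ℕ) {V a P : ℝ} (hV : 0 ≤ V) (ha : 0 ≤ a)
    (hP : 0 ≤ P) (h : V ^ (m + 1) ≤ a * P ^ m) : (m + 1) * V ≤ a + m * P := by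
  set w : ℝ := ((m : ℝ) + 1)⁻¹
  have hw : w + m * w = 1 := by simp only [w]; field_simp; ring
  have hamgm : a ^ w * P ^ (m * w) ≤ w * a + m * w * P :=
    geom_mean_le_arith_mean2_weighted (by positivity) (by positivity) ha hP hw
  have hVle : V ≤ a ^ w * P ^ (m * w) :=
    calc V = (V ^ (m + 1)) ^ w := by
          have := pow_rpow_inv_natCast hV m.succ_ne_zero
          push_cast at this
          exact this.symm
      _ ≤ (a * P ^ m) ^ w := by gcongr
      _ = a ^ w * P ^ (m * w) := by
          rw [mul_rpow ha (by positivity), ← rpow_natCast, ← rpow_mul hP]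
  calc (m + 1) * V ≤ (m + 1) * (w * a + m * w * P) := by gcongr; linarith
    _ = a + m * P := by simp only [w]; field_simp

lemma le_rpow_one_div_pow {p : ℝ} (hp0 : 0 ≤ p) (hp1 : p ≤ 1) (m : ℕ) :
    p ≤ (p ^ ((1 : ℝ) / m)) ^ m := by
  rcases eq_or_ne m 0 with rfl | hm
  · -- `1 / 0 = 0`, so the right-hand side is `1`
    simpa using hp1
  · rw [one_div, rpow_inv_natCast_pow hp0 hm]

lemma succ_mul_le_add_mul_rpow (m : ℕ) {p a V : ℝ} (hp0 : 0 ≤ p) (hp1 : p ≤ 1) (ha : 0 ≤ a)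
    (hV : 0 ≤ V) (h : V ^ (m + 1) ≤ a * p) : (m + 1) * V ≤ a + m * p ^ ((1 : ℝ) / m) :=
  succ_mul_le_add_mul_of_pow_succ_le m hV ha (rpow_nonneg hp0 _)
    (h.trans (mul_le_mul_of_nonneg_left (le_rpow_one_div_pow hp0 hp1 m) ha))

lemma add_three_mul_le_nine_mul_add (m : ℕ) {p s U : ℝ} (hp0 : 0 ≤ p) (hp1 : p ≤ 1)
    (hs : 0 ≤ s) (hU : 0 ≤ U) (hUs : U ^ (m + 1) ≤ s * p) :
    (m + 3) * U ≤ 9 * s + m * p ^ ((1 : ℝ) / m) := by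
  have hpow : (1 + 2 / ((m : ℝ) + 1)) ^ (m + 1) ≤ 9 :=
    calc (1 + 2 / ((m : ℝ) + 1)) ^ (m + 1) ≤ exp 2 := by
          have h2 : (-2 : ℝ) ≤ ↑(m + 1) := by push_cast; linarith [m.cast_nonneg (α := ℝ)]
          simpa [sub_eq_add_neg, neg_div] using one_sub_div_pow_le_exp_neg h2
      _ = exp 1 ^ 2 := by rw [← exp_nat_mul]; norm_num
      _ ≤ 9 := by nlinarith [exp_one_lt_three, exp_pos 1]
  have hV : ((1 + 2 / ((m : ℝ) + 1)) * U) ^ (m + 1) ≤ 9 * s * p := by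
    rw [mul_pow, mul_assoc]
    exact mul_le_mul hpow hUs (by positivity) (by norm_num)
  calc (m + 3) * U = (m + 1) * ((1 + 2 / ((m : ℝ) + 1)) * U) := by field_simp; ring
    _ ≤ 9 * s + m * p ^ ((1 : ℝ) / m) :=
        succ_mul_le_add_mul_rpow m (a := 9 * s) hp0 hp1 (by positivity) (by positivity) hV

lemma exp_neg_two_mul_le_one_sub {y : ℝ} (hy0 : 0 ≤ y) (hy : y ≤ 1 / 2) :
    exp (-(2 * y)) ≤ 1 - y := by
  rw [exp_neg, inv_le_comm₀ (exp_pos _) (by linarith)]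
  calc (1 - y)⁻¹ ≤ 2 * y + 1 := by
        rw [inv_le_iff_one_le_mul₀ (by linarith)]; nlinarith
    _ ≤ exp (2 * y) := add_one_le_exp _

lemma exp_nine_div_ten_mul_le_one_add {T : ℝ} (hT0 : 0 ≤ T) (hT : T ≤ 1 / 9) :
    exp (9 / 10 * T) ≤ 1 + T := by
  rw [← inv_inv (exp _), ← exp_neg, inv_le_comm₀ (exp_pos _) (by linarith)]
  calc (1 + T)⁻¹ ≤ 1 - 9 / 10 * T := by
        rw [inv_le_iff_one_le_mul₀ (by linarith)]; nlinarith
    _ ≤ exp (-(9 / 10 * T)) := one_sub_le_exp_neg _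

noncomputable def gDeriv (n : ℕ) (t : ℝ) : ℝ :=
  (1 - 0.1 * t ^ ((1 : ℝ) / n)) * exp (-0.1 * n * t ^ ((1 : ℝ) / n))

lemma g_eq (n : ℕ) (t : ℝ) : g n t = t * exp (-0.1 * n * t ^ ((1 : ℝ) / n)) := by
  unfold g
  split_ifs with hn <;> simp [hn]

lemma continuous_g (n : ℕ) : Continuous (g n) := by
  rw [funext (g_eq n)]
  exact continuous_id.mul
    ((continuous_const.mul (continuous_rpow_const (by positivity))).rexp)

lemma hasDerivAt_g {n : ℕ} (hn : n ≠ 0) {t : ℝ} (ht : 0 < t) :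
    HasDerivAt (g n) (gDeriv n t) t := by
  have hroot : HasDerivAt (fun t : ℝ => t ^ ((1 : ℝ) / n))
      (1 / n * t ^ ((1 : ℝ) / n - 1)) t :=
    hasDerivAt_rpow_const (Or.inl ht.ne')
  rw [funext (g_eq n)]
  refine ((hasDerivAt_id' t).mul (hroot.const_mul (-0.1 * (n : ℝ))).exp).congr_deriv ?_
  unfold gDeriv
  rw [rpow_sub ht, rpow_one]
  field_simp
  ring

lemma gDeriv_nonneg (n : ℕ) {t : ℝ} (ht0 : 0 ≤ t) (ht1 : t ≤ 1) : 0 ≤ gDeriv n t := by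
  have : t ^ ((1 : ℝ) / n) ≤ 1 := rpow_le_one ht0 ht1 (by positivity)
  exact mul_nonneg (by linarith) (exp_pos _).le

lemma antitoneOn_gDeriv (n : ℕ) : AntitoneOn (gDeriv n) (Icc 0 1) := by
  intro s hs t ht hst
  have hroot : s ^ ((1 : ℝ) / n) ≤ t ^ ((1 : ℝ) / n) := rpow_le_rpow hs.1 hst (by positivity)
  have ht1 : t ^ ((1 : ℝ) / n) ≤ 1 := rpow_le_one ht.1 ht.2 (by positivity)
  have hexp : exp (-0.1 * n * t ^ ((1 : ℝ) / n)) ≤ exp (-0.1 * n * s ^ ((1 : ℝ) / n)) :=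
    exp_le_exp.2 (by nlinarith [n.cast_nonneg (α := ℝ)])
  have hs0 := rpow_nonneg hs.1 ((1 : ℝ) / n)
  exact mul_le_mul (by linarith) hexp (exp_pos _).le (by linarith)

lemma concaveOn_g {n : ℕ} (hn : n ≠ 0) : ConcaveOn ℝ (Icc 0 1) (g n) := by
  refine AntitoneOn.concaveOn_of_deriv (convex_Icc 0 1) (continuous_g n).continuousOn ?_ ?_ <;>
    rw [interior_Icc]
  · exact fun t ht => (hasDerivAt_g hn ht.1).differentiableAt.differentiableWithinAt
  · intro s hs t ht hst
    rw [(hasDerivAt_g hn hs.1).deriv, (hasDerivAt_g hn ht.1).deriv]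
    exact antitoneOn_gDeriv n (Ioo_subset_Icc_self hs) (Ioo_subset_Icc_self ht) hst

lemma monotoneOn_g {n : ℕ} (hn : n ≠ 0) : MonotoneOn (g n) (Icc 0 1) := by
  refine monotoneOn_of_hasDerivWithinAt_nonneg (convex_Icc 0 1) (continuous_g n).continuousOn
    (f' := gDeriv n) ?_ ?_ <;> rw [interior_Icc]
  · exact fun t ht => (hasDerivAt_g hn ht.1).hasDerivWithinAt
  · exact fun t ht => gDeriv_nonneg n ht.1.le ht.2.le

lemma g_add_mul_gDeriv_le {n : ℕ} (hn : n ≠ 0) {y x : ℝ} (hy : 0 ≤ y) (hyx : y ≤ x)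
    (hx : x ≤ 1) : g n y + (x - y) * gDeriv n x ≤ g n x := by
  rcases hyx.eq_or_lt with rfl | hlt
  · simp
  have hslope := (concaveOn_g hn).le_slope_of_hasDerivAt ⟨hy, hlt.le.trans hx⟩
    ⟨hy.trans hlt.le, hx⟩ hlt (hasDerivAt_g hn (hy.trans_lt hlt))
  rw [slope_def_field, le_div_iff₀ (sub_pos.2 hlt)] at hslope
  linarith

lemma mul_gDeriv_le_g (n : ℕ) {y x : ℝ} (hy : 0 ≤ y) (hyx : y ≤ x) :
    y * gDeriv n x ≤ g n y := by
  have hroot : y ^ ((1 : ℝ) / n) ≤ x ^ ((1 : ℝ) / n) := rpow_le_rpow hy hyx (by positivity)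
  have hexp : exp (-0.1 * n * x ^ ((1 : ℝ) / n)) ≤ exp (-0.1 * n * y ^ ((1 : ℝ) / n)) :=
    exp_le_exp.2 (by nlinarith [n.cast_nonneg (α := ℝ)])
  rw [g_eq, gDeriv]
  gcongr
  calc (1 - 0.1 * x ^ ((1 : ℝ) / n)) * exp (-0.1 * n * x ^ ((1 : ℝ) / n))
      ≤ 1 * exp (-0.1 * n * x ^ ((1 : ℝ) / n)) := by
        gcongr; linarith [rpow_nonneg (hy.trans hyx) ((1 : ℝ) / n)]
    _ ≤ exp (-0.1 * n * y ^ ((1 : ℝ) / n)) := by rwa [one_mul]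

lemma mul_g_le_g_of_mul_le {n : ℕ} (hn : n ≠ 0) {θ p q : ℝ} (hθ0 : 0 ≤ θ) (hθ1 : θ ≤ 1)
    (hp0 : 0 ≤ p) (hp1 : p ≤ 1) (hq1 : q ≤ 1) (h : θ * p ≤ q) : θ * g n p ≤ g n q :=
  calc θ * g n p = θ * g n p + (1 - θ) * g n 0 := by simp [g_eq]
    _ ≤ g n (θ * p + (1 - θ) * 0) :=
        (concaveOn_g hn).2 ⟨hp0, hp1⟩ ⟨le_rfl, zero_le_one⟩ hθ0 (by linarith) (by ring)
    _ = g n (θ * p) := by rw [mul_zero, add_zero]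
    _ ≤ g n q := monotoneOn_g hn ⟨by positivity, by nlinarith⟩
        ⟨(mul_nonneg hθ0 hp0).trans h, hq1⟩ h

lemma nine_div_ten_mul_g_le_g_succ (m : ℕ) {p : ℝ} (hp0 : 0 ≤ p) (hp1 : p ≤ 1) :
    9 / 10 * g m p ≤ g (m + 1) p := by
  set R := p ^ ((1 : ℝ) / ↑(m + 1))
  have hRpow : R ^ (m + 1) = 1 * p := by
    simp only [R, one_mul, one_div]
    exact rpow_inv_natCast_pow hp0 m.succ_ne_zero
  have hamgm := succ_mul_le_add_mul_rpow m hp0 hp1 zero_le_one (rpow_nonneg hp0 _) hRpow.le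
  have hexp : (9 / 10 : ℝ) ≤ exp (-0.1) := by
    have := one_sub_le_exp_neg 0.1
    norm_num at this ⊢
    linarith
  rw [g_eq, g_eq]
  calc 9 / 10 * (p * exp (-0.1 * m * p ^ ((1 : ℝ) / m)))
      ≤ exp (-0.1) * (p * exp (-0.1 * m * p ^ ((1 : ℝ) / m))) := by gcongr
    _ = p * exp (-0.1 - 0.1 * m * p ^ ((1 : ℝ) / m)) := by
        rw [sub_eq_add_neg, exp_add]; ring_nf
    _ ≤ p * exp (-0.1 * ↑(m + 1) * R) := by
        gcongr
        push_cast
        linarith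

lemma g_le_mul_gDeriv_succ (m : ℕ) {p q lam : ℝ} (hp0 : 0 < p) (hp1 : p ≤ 1) (hq0 : 0 ≤ q)
    (hq1 : q ≤ 1) (hlam0 : 0 ≤ lam) (hlam1 : lam ≤ 1) (hqp : (1 - lam) * q ≤ p / 9) :
    (1 - lam) * g m p ≤ (p + (1 - lam) * q) * gDeriv (m + 1) (lam * p + (1 - lam) * q) := by
  set b := 1 - lam
  set x := lam * p + b * q
  set T := b * q / p
  set U := x ^ ((1 : ℝ) / ↑(m + 1))
  set P := p ^ ((1 : ℝ) / m)
  have hb0 : 0 ≤ b := by linarith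
  have hT0 : 0 ≤ T := by positivity
  have hT : T ≤ 1 / 9 := by rw [div_le_iff₀ hp0]; linarith
  have hx : x = (lam + T) * p := by simp only [x, T]; field_simp
  have hx0 : 0 ≤ x := by positivity
  have hU0 : 0 ≤ U := rpow_nonneg hx0 _
  have hU1 : U ≤ 1 := rpow_le_one hx0 (by nlinarith) (by positivity)
  have hUpow : U ^ (m + 1) = (lam + T) * p := by
    simp only [U, one_div, ← hx]
    exact rpow_inv_natCast_pow hx0 m.succ_ne_zero
  have hamgm : (m + 3) * U ≤ 9 * (lam + T) + m * P :=
    add_three_mul_le_nine_mul_add m hp0.le hp1 (by positivity) hU0 hUpow.le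
  have hbexp : b ≤ exp (-lam) := one_sub_le_exp_neg lam
  have hTexp := exp_nine_div_ten_mul_le_one_add hT0 hT
  have hUexp := exp_neg_two_mul_le_one_sub (y := 0.1 * U) (by positivity) (by linarith)
  rw [g_eq]
  calc b * (p * exp (-0.1 * m * P))
      ≤ exp (-lam) * (p * exp (-0.1 * m * P)) := by gcongr
    _ = p * exp (-lam + -0.1 * m * P) := by rw [exp_add]; ring
    _ ≤ p * exp (9 / 10 * T + -(2 * (0.1 * U)) + -0.1 * ↑(m + 1) * U) := by
        gcongr p * exp ?_
        push_cast
        linarith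
    _ = p * exp (9 / 10 * T) * exp (-(2 * (0.1 * U))) * exp (-0.1 * ↑(m + 1) * U) := by
        rw [exp_add, exp_add]; ring
    _ ≤ p * (1 + T) * (1 - 0.1 * U) * exp (-0.1 * ↑(m + 1) * U) := by gcongr
    _ = (p + b * q) * gDeriv (m + 1) x := by
        simp only [gDeriv, T, U]
        field_simp

lemma mul_add_mul_le_g_of_div_nine_le (m : ℕ) {p q lam : ℝ} (hp0 : 0 ≤ p) (hp1 : p ≤ 1)
    (hq0 : 0 ≤ q) (hq1 : q ≤ 1) (hlam0 : 0 ≤ lam) (hlam1 : lam ≤ 1) (hpq : p / 9 ≤ q) :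
    (1 - lam) * (lam * g m p + (1 - lam) * g (m + 1) q) ≤
      g (m + 1) (lam * p + (1 - lam) * q) := by
  have hchord : lam * g (m + 1) p + (1 - lam) * g (m + 1) q ≤
      g (m + 1) (lam * p + (1 - lam) * q) :=
    (concaveOn_g m.succ_ne_zero).2 ⟨hp0, hp1⟩ ⟨hq0, hq1⟩ hlam0 (by linarith) (by ring)
  have hsucc := nine_div_ten_mul_g_le_g_succ m hp0 hp1
  have hq : 1 / 9 * g (m + 1) p ≤ g (m + 1) q :=
    mul_g_le_g_of_mul_le m.succ_ne_zero (by norm_num) (by norm_num) hp0 hp1 hq1 (by linarith)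
  have hg0 : 0 ≤ g m p := by rw [g_eq]; positivity
  nlinarith [mul_nonneg (mul_nonneg hlam0 (sub_nonneg.2 hlam1)) (sub_nonneg.2 hq),
    mul_nonneg hlam0 (sub_nonneg.2 hsucc), mul_nonneg (mul_nonneg hlam0 hlam0) hg0,
    mul_nonneg (mul_nonneg hlam0 (sub_nonneg.2 hlam1)) (sub_nonneg.2 hsucc)]

lemma mul_add_mul_le_g_of_lt_div_nine (m : ℕ) {p q lam : ℝ} (hp1 : p ≤ 1)
    (hq0 : 0 ≤ q) (hq1 : q ≤ 1) (hlam0 : 0 ≤ lam) (hlam1 : lam ≤ 1) (hqp : q < p / 9) :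
    (1 - lam) * (lam * g m p + (1 - lam) * g (m + 1) q) ≤
      g (m + 1) (lam * p + (1 - lam) * q) := by
  have hp0 : 0 < p := by linarith
  set x := lam * p + (1 - lam) * q
  have hqx : q ≤ x := by nlinarith
  have htangent := g_add_mul_gDeriv_le m.succ_ne_zero hq0 hqx (by nlinarith)
  have hqD := mul_gDeriv_le_g (m + 1) hq0 hqx
  have hkey := g_le_mul_gDeriv_succ m hp0 hp1 hq0 hq1 hlam0 hlam1 (by nlinarith)
  nlinarith [mul_le_mul_of_nonneg_left hkey hlam0,
    mul_le_mul_of_nonneg_left hqD (by nlinarith : 0 ≤ lam * (2 - lam))]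

theorem stmt_10 (p q lam : ℝ) (hp : p ∈ Set.Icc (0 : ℝ) 1) (hq : q ∈ Set.Icc (0 : ℝ) 1)
    (hlam : lam ∈ Set.Icc (0 : ℝ) 1) (h : ℕ) (hh : 1 ≤ h) :
    (1 - lam) * (lam * g (h - 1) p + (1 - lam) * g h q) ≤
      g h (lam * p + (1 - lam) * q) := by
  obtain ⟨m, rfl⟩ : ∃ m, h = m + 1 := ⟨h - 1, by omega⟩
  rw [Nat.add_sub_cancel]
  rcases le_or_gt (p / 9) q with hpq | hqp
  · exact mul_add_mul_le_g_of_div_nine_le m hp.1 hp.2 hq.1 hq.2 hlam.1 hlam.2 hpq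
  · exact mul_add_mul_le_g_of_lt_div_nine m hp.2 hq.1 hq.2 hlam.1 hlam.2 hqp
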